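/- Fix an integer m ≥ 2 and λ ∈ ℂ with Re(λ) > 1/2. Let φ and ψ be the characteristic functions of two complex random variables X and Y, i.e. φ(t) = E e^{i⟨t,X⟩} and ψ(t) = E e^{i⟨t,Y⟩} for t ∈ ℂ, where ⟨x,y⟩ = Re(x̄y). Then for every t ∈ ℂ with t ≠ 0, |E[φ^m(e^{−λ̄ T} t)] − E[ψ^m(e^{−λ̄ T} t)]| / |t|² ≤ m · E[e^{−2 Re(λ) T}] · sup_{s ≠ 0} |φ(s) − ψ(s)| / |s|², and moreover m · E[e^{−2 Re(λ) T}] < 1. -/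

import Mathlib

open MeasureTheory ProbabilityTheory

/-- The exponential distribution with rate `j`, given by its density
`x ↦ j e^{-jx}` on `(0,∞)`. -/
noncomputable def expLaw (j : ℕ) : Measure ℝ :=
  volume.withDensity (fun x => ENNReal.ofReal (if 0 < x then j * Real.exp (-(j * x)) else 0))

/-- The law of `T = τ₍₁₎ + ⋯ + τ₍ₘ₋₁₎`, where the `τ₍ⱼ₎` are independent and
`τ₍ⱼ₎` is exponential of rate `j`. -/
noncomputable def lawT (m : ℕ) : Measure ℝ :=
  Measure.map (fun x => ∑ j, x j) (Measure.pi (fun j : Fin (m - 1) => expLaw ((j : ℕ) + 1)))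

/-- A probability law `μZ` on `ℂ` solves the fixed point equation
`Z =_d e^{-λT}(Z⁽¹⁾ + ⋯ + Z⁽ᵐ⁾)` if, whenever `T, Z⁽¹⁾, …, Z⁽ᵐ⁾` are independent
(i.e. their joint law is the product measure), with `T` as above and each `Z⁽ⁱ⁾` of
law `μZ`, the law of `e^{-λT}(Z⁽¹⁾ + ⋯ + Z⁽ᵐ⁾)` is again `μZ`. -/
def SolvesFP (m : ℕ) (lam : ℂ) (μZ : Measure ℂ) : Prop :=
  Measure.map (fun p : ℝ × (Fin m → ℂ) => Complex.exp (-lam * p.1) * ∑ i, p.2 i)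
    ((lawT m).prod (Measure.pi fun _ : Fin m => μZ)) = μZ

/-!
Since `φ` and `ψ` take values in the closed unit disc, `z ↦ zᵐ` is `m`-Lipschitz there, so
`|φᵐ(s) − ψᵐ(s)| ≤ m D |s|²` with `D = sup_{s ≠ 0} |φ(s) − ψ(s)| / |s|²`.
At `s = e^{−λ̄T} t` one has `|s|² = e^{−2 Re(λ) T} |t|²`, and integrating over `T` gives the
estimate.
For `c = 2 Re(λ) > 1`, independence of the `τ₍ⱼ₎` gives `E e^{−cT} = ∏_{j<m−1} (j+1)/(j+1+c)`;
multiplying by `m` and passing from `m` to `m + 1` multiplies the result by `(m+1)/(m+c) < 1`,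
starting from `2/(1+c) < 1` at `m = 2`.
-/

open Set Finset Complex

lemma expLaw_eq_withDensity_restrict (j : ℕ) :
    expLaw j = (volume.restrict (Ioi 0)).withDensity
      fun x => ENNReal.ofReal (j * Real.exp (-(j * x))) := by
  rw [expLaw, ← withDensity_indicator measurableSet_Ioi]
  congr 1 with x
  by_cases hx : 0 < x <;> simp [hx]

lemma integral_expLaw {E : Type*} [NormedAddCommGroup E] [NormedSpace ℝ E] (j : ℕ) (g : ℝ → E) :
    ∫ x, g x ∂expLaw j = ∫ x in Ioi 0, (j * Real.exp (-(j * x))) • g x := by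
  rw [expLaw_eq_withDensity_restrict, integral_withDensity_eq_integral_toReal_smul (by fun_prop)
    (ae_of_all _ fun _ => ENNReal.ofReal_lt_top)]
  congr 1 with x
  rw [ENNReal.toReal_ofReal (by positivity)]

lemma integral_exp_neg_mul_expLaw (j : ℕ) {c : ℝ} (hjc : 0 < j + c) :
    ∫ x, Real.exp (-c * x) ∂expLaw j = j / (j + c) := by
  have h := integral_exp_mul_Ioi (a := -(j + c)) (by linarith) 0
  simp only [mul_zero, Real.exp_zero] at h
  rw [integral_expLaw]
  simp_rw [smul_eq_mul, mul_assoc, ← Real.exp_add]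
  rw [integral_const_mul]
  simp_rw [show ∀ x : ℝ, -(j * x) + -c * x = -(j + c) * x from fun x => by ring]
  rw [h]
  field_simp

instance isProbabilityMeasure_expLaw_succ (j : ℕ) : IsProbabilityMeasure (expLaw (j + 1)) := by
  have h := integral_exp_neg_mul_expLaw (j + 1) (c := 0) (by positivity)
  simp only [neg_zero, zero_mul, Real.exp_zero, integral_const, smul_eq_mul, mul_one,
    add_zero] at h
  rw [div_self (by positivity)] at h
  exact ⟨ENNReal.toReal_eq_one_iff _ |>.1 h⟩

instance isProbabilityMeasure_lawT (m : ℕ) : IsProbabilityMeasure (lawT m) :=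
  Measure.isProbabilityMeasure_map (by fun_prop)

lemma integral_exp_neg_mul_lawT (m : ℕ) {c : ℝ} (hc : 0 ≤ c) :
    ∫ u, Real.exp (-c * u) ∂lawT m = ∏ j : Fin (m - 1), ((j : ℝ) + 1) / (j + 1 + c) := by
  rw [lawT, integral_map (by fun_prop) (by fun_prop)]
  simp_rw [Finset.mul_sum, Real.exp_sum]
  rw [integral_fintype_prod_eq_prod (fun j x => Real.exp (-c * x))]
  congr 1 with j
  rw [integral_exp_neg_mul_expLaw _ (by positivity)]
  push_cast
  rfl

lemma add_two_mul_prod_div_lt_one {c : ℝ} (hc : 1 < c) (n : ℕ) :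
    (n + 2 : ℝ) * ∏ j ∈ range (n + 1), ((j : ℝ) + 1) / (j + 1 + c) < 1 := by
  induction n with
  | zero =>
    rw [prod_range_one, Nat.cast_zero, zero_add, zero_add, mul_one_div, div_lt_one (by linarith)]
    linarith
  | succ n ih =>
    have hfac : (n + 3 : ℝ) / (n + 2 + c) < 1 := by rw [div_lt_one (by positivity)]; linarith
    calc ((n + 1 : ℕ) + 2 : ℝ) * ∏ j ∈ range (n + 1 + 1), ((j : ℝ) + 1) / (j + 1 + c)
        = (n + 3 : ℝ) / (n + 2 + c)
            * ((n + 2) * ∏ j ∈ range (n + 1), ((j : ℝ) + 1) / (j + 1 + c)) := by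
          rw [prod_range_succ]; push_cast; field_simp; ring
      _ < 1 := mul_lt_one_of_nonneg_of_lt_one_left (by positivity) hfac ih.le

lemma norm_pow_sub_pow_le {R : Type*} [SeminormedRing R] [NormOneClass R] {a b : R}
    (ha : ‖a‖ ≤ 1) (hb : ‖b‖ ≤ 1) (n : ℕ) : ‖a ^ n - b ^ n‖ ≤ n * ‖a - b‖ := by
  induction n with
  | zero => simp
  | succ n ih =>
    have hbn : ‖b ^ n‖ ≤ 1 := (norm_pow_le b n).trans (pow_le_one₀ (norm_nonneg b) hb)
    calc ‖a ^ (n + 1) - b ^ (n + 1)‖ = ‖a * (a ^ n - b ^ n) + (a - b) * b ^ n‖ := by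
          rw [pow_succ', pow_succ']; noncomm_ring
      _ ≤ ‖a‖ * ‖a ^ n - b ^ n‖ + ‖a - b‖ * ‖b ^ n‖ :=
          (norm_add_le _ _).trans (add_le_add (norm_mul_le _ _) (norm_mul_le _ _))
      _ ≤ 1 * (n * ‖a - b‖) + ‖a - b‖ * 1 := by gcongr
      _ = (n + 1 : ℕ) * ‖a - b‖ := by push_cast; ring

lemma enorm_integral_pow_sub_integral_pow_le {α R : Type*} [MeasurableSpace α] {ν : Measure α}
    [IsFiniteMeasure ν] [NormedRing R] [NormOneClass R] [NormedSpace ℝ R] {f g : α → R}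
    (hf : AEStronglyMeasurable f ν) (hg : AEStronglyMeasurable g ν)
    (hf1 : ∀ x, ‖f x‖ ≤ 1) (hg1 : ∀ x, ‖g x‖ ≤ 1) (n : ℕ) :
    ‖∫ x, f x ^ n ∂ν - ∫ x, g x ^ n ∂ν‖ₑ ≤ n * ∫⁻ x, ‖f x - g x‖ₑ ∂ν := by
  have integrable_pow : ∀ h : α → R, AEStronglyMeasurable h ν → (∀ x, ‖h x‖ ≤ 1) →
      Integrable (fun x => h x ^ n) ν := fun h hm h1 =>
    Integrable.of_bound (hm.pow n) 1
      (ae_of_all _ fun x => (norm_pow_le _ _).trans (pow_le_one₀ (norm_nonneg _) (h1 x)))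
  rw [← integral_sub (integrable_pow f hf hf1) (integrable_pow g hg hg1),
    ← lintegral_const_mul' _ _ (ENNReal.natCast_ne_top n)]
  refine (enorm_integral_le_lintegral_enorm _).trans (lintegral_mono fun x => ?_)
  rw [← ofReal_norm, ← ofReal_norm, ← ENNReal.ofReal_natCast,
    ← ENNReal.ofReal_mul n.cast_nonneg]
  exact ENNReal.ofReal_le_ofReal (norm_pow_sub_pow_le (hf1 x) (hg1 x) n)

lemma ofReal_norm_div_norm_pow {E F : Type*} [NormedAddCommGroup E] [SeminormedAddCommGroup F]
    (y : F) {s : E} (hs : s ≠ 0) (k : ℕ) :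
    ENNReal.ofReal (‖y‖ / ‖s‖ ^ k) = ‖y‖ₑ / ‖s‖ₑ ^ k := by
  rw [ENNReal.ofReal_div_of_pos (by positivity), ENNReal.ofReal_pow (norm_nonneg _),
    ofReal_norm, ofReal_norm]

lemma enorm_le_iSup_mul {E F : Type*} [NormedAddCommGroup E] [SeminormedAddCommGroup F]
    (f : E → F) (k : ℕ) {s : E} (hs : s ≠ 0) :
    ‖f s‖ₑ ≤ (⨆ (s : E) (_ : s ≠ 0), ENNReal.ofReal (‖f s‖ / ‖s‖ ^ k)) * ‖s‖ₑ ^ k := by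
  rw [← ENNReal.div_le_iff (pow_ne_zero _ (enorm_ne_zero.2 hs)) (by simp),
    ← ofReal_norm_div_norm_pow _ hs]
  exact le_iSup₂ (f := fun s (_ : s ≠ 0) => ENNReal.ofReal (‖f s‖ / ‖s‖ ^ k)) s hs

lemma charFun_map_apply {Ω : Type*} [MeasurableSpace Ω] {μ : Measure Ω} {X : Ω → ℂ}
    (hX : AEMeasurable X μ) (t : ℂ) :
    charFun (μ.map X) t = ∫ ω, exp (I * ((starRingEnd ℂ t * X ω).re : ℂ)) ∂μ := by
  rw [charFun_apply, integral_map hX (by fun_prop)]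
  congr 1 with ω
  rw [Complex.inner, ← Complex.conj_re, map_mul, Complex.conj_conj, mul_comm I]

lemma enorm_cexp_neg_conj_mul_sq (lam : ℂ) (u : ℝ) (t : ℂ) :
    ‖exp (-(starRingEnd ℂ lam) * u) * t‖ₑ ^ 2
      = ENNReal.ofReal (Real.exp (-(2 * lam.re) * u)) * ‖t‖ₑ ^ 2 := by
  rw [← ofReal_norm, ← ofReal_norm, ← ENNReal.ofReal_pow (norm_nonneg _),
    ← ENNReal.ofReal_pow (norm_nonneg _), ← ENNReal.ofReal_mul (Real.exp_pos _).le,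
    norm_mul, mul_pow, Complex.norm_exp, ← Real.exp_nat_mul]
  congr 3
  simp only [neg_mul, neg_re, mul_re, conj_re, conj_im, ofReal_re, ofReal_im, mul_zero, sub_zero]
  ring

lemma enorm_integral_pow_comp_sub_le (ν : Measure ℝ) [IsFiniteMeasure ν] {φ ψ : ℂ → ℂ}
    (hφ : Measurable φ) (hψ : Measurable ψ) (hφ1 : ∀ s, ‖φ s‖ ≤ 1) (hψ1 : ∀ s, ‖ψ s‖ ≤ 1)
    (m : ℕ) (lam : ℂ) {t : ℂ} (ht : t ≠ 0) :
    ‖∫ u, φ (exp (-(starRingEnd ℂ lam) * u) * t) ^ m ∂ν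
        - ∫ u, ψ (exp (-(starRingEnd ℂ lam) * u) * t) ^ m ∂ν‖ₑ
      ≤ m * (⨆ (s : ℂ) (_ : s ≠ 0), ENNReal.ofReal (‖φ s - ψ s‖ / ‖s‖ ^ 2)) * ‖t‖ₑ ^ 2
        * ∫⁻ u, ENNReal.ofReal (Real.exp (-(2 * lam.re) * u)) ∂ν := by
  set D := ⨆ (s : ℂ) (_ : s ≠ 0), ENNReal.ofReal (‖φ s - ψ s‖ / ‖s‖ ^ 2)
  have hg : Measurable fun u : ℝ => exp (-(starRingEnd ℂ lam) * u) * t := by fun_prop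
  calc _ ≤ m * ∫⁻ u, ‖φ (exp (-(starRingEnd ℂ lam) * u) * t)
            - ψ (exp (-(starRingEnd ℂ lam) * u) * t)‖ₑ ∂ν :=
        enorm_integral_pow_sub_integral_pow_le (hφ.comp hg).aestronglyMeasurable
          (hψ.comp hg).aestronglyMeasurable (fun _ => hφ1 _) (fun _ => hψ1 _) m
    _ ≤ m * ∫⁻ u, D * ENNReal.ofReal (Real.exp (-(2 * lam.re) * u)) * ‖t‖ₑ ^ 2 ∂ν := by
        gcongr with u
        rw [mul_assoc, ← enorm_cexp_neg_conj_mul_sq]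
        exact enorm_le_iSup_mul (fun s => φ s - ψ s) 2 (mul_ne_zero (exp_ne_zero _) ht)
    _ = _ := by
        rw [lintegral_mul_const _ (by fun_prop), lintegral_const_mul _ (by fun_prop)]
        ring

/-- Contraction estimate on characteristic functions: for `t ≠ 0`,
`|E[φᵐ(e^{-λ̄T}t)] − E[ψᵐ(e^{-λ̄T}t)]| / |t|² ≤ m·E[e^{-2Re(λ)T}] · sup_{s≠0} |φ(s)−ψ(s)|/|s|²`,
and `m·E[e^{-2Re(λ)T}] < 1`. -/
theorem stmt7 {Ω : Type*} [MeasurableSpace Ω] (μ : Measure Ω) [IsProbabilityMeasure μ]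
    (m : ℕ) (hm : 2 ≤ m) (lam : ℂ) (hre : 1 / 2 < lam.re)
    (X Y : Ω → ℂ) (hX : Measurable X) (hY : Measurable Y)
    (φ ψ : ℂ → ℂ)
    (hφ : ∀ t : ℂ, φ t = ∫ ω, Complex.exp (Complex.I * ((starRingEnd ℂ t * X ω).re : ℂ)) ∂μ)
    (hψ : ∀ t : ℂ, ψ t = ∫ ω, Complex.exp (Complex.I * ((starRingEnd ℂ t * Y ω).re : ℂ)) ∂μ) :
    (∀ t : ℂ, t ≠ 0 →
      ENNReal.ofReal (‖
          ((∫ u, (φ (Complex.exp (-(starRingEnd ℂ lam) * u) * t)) ^ m ∂(lawT m)) -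
            ∫ u, (ψ (Complex.exp (-(starRingEnd ℂ lam) * u) * t)) ^ m ∂(lawT m))‖
        / ‖t‖ ^ 2)
      ≤ ENNReal.ofReal (m * ∫ u, Real.exp (-(2 * lam.re) * u) ∂(lawT m)) *
          ⨆ (s : ℂ) (_ : s ≠ 0),
            ENNReal.ofReal (‖φ s - ψ s‖ / ‖s‖ ^ 2)) ∧
    m * ∫ u, Real.exp (-(2 * lam.re) * u) ∂(lawT m) < 1 := by
  have hE := integral_exp_neg_mul_lawT m (c := 2 * lam.re) (by linarith)
  refine ⟨fun t ht => ?_, ?_⟩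
  · have : IsProbabilityMeasure (μ.map X) := Measure.isProbabilityMeasure_map hX.aemeasurable
    have : IsProbabilityMeasure (μ.map Y) := Measure.isProbabilityMeasure_map hY.aemeasurable
    obtain rfl : φ = charFun (μ.map X) :=
      funext fun s => (hφ s).trans (charFun_map_apply hX.aemeasurable s).symm
    obtain rfl : ψ = charFun (μ.map Y) :=
      funext fun s => (hψ s).trans (charFun_map_apply hY.aemeasurable s).symm
    have hEpos : 0 < ∫ u, Real.exp (-(2 * lam.re) * u) ∂lawT m :=
      hE ▸ prod_pos fun j _ => by positivity
    rw [ofReal_norm_div_norm_pow _ ht, ENNReal.ofReal_mul (by positivity), ENNReal.ofReal_natCast,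
      ofReal_integral_eq_lintegral_ofReal (Integrable.of_integral_ne_zero hEpos.ne')
        (ae_of_all _ fun _ => (Real.exp_pos _).le)]
    refine ENNReal.div_le_of_le_mul ((enorm_integral_pow_comp_sub_le _ (by fun_prop) (by fun_prop)
      norm_charFun_le_one norm_charFun_le_one m lam ht).trans_eq ?_)
    ring
  · obtain ⟨n, rfl⟩ : ∃ n, m = n + 2 := ⟨m - 2, by omega⟩
    rw [hE, Fin.prod_univ_eq_prod_range (fun j => ((j : ℝ) + 1) / (j + 1 + 2 * lam.re))]
    exact_mod_cast add_two_mul_prod_div_lt_one (by linarith) n
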